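/- arXiv:1612.03183 — 2 statements merged into one kernel-verified Lean document; each statement's English description precedes it below -/
import Mathlib

section
/- For 0 < α < 1 with α ≠ 1/2, the double integral ∫₀¹∫₀¹ (1-xy)^(2α-2) dx dy equals (γ + Ψ(2α))/(2α-1), where γ is the Euler–Mascheroni constant and Ψ is the digamma function; in particular the integral is finite. -/
/-!
Integrating first in `x` gives `(1 - (1 - y) ^ (z - 1)) / (y (z - 1))` with `z = 2α`. After
`u = 1 - y`, expanding `1 / (1 - u)` as a geometric series turns the remaining integral into
`∑ (1 / (m + 1) - 1 / (z + m))`, and this series is `Ψ(z) + γ`: differentiate the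
Bohr–Mollerup approximants of `log Γ` term by term, the series converging uniformly near `z`.
Integrability comes from `(1 - x) (1 - y) ≤ (1 - x y) ^ 2`, which dominates the kernel by the
integrable product `(1 - x) ^ (s / 2) (1 - y) ^ (s / 2)` for `-2 < s ≤ 0`.
-/

/-- The digamma function `Ψ`, the logarithmic derivative of the Gamma function. -/
noncomputable def digamma (x : ℝ) : ℝ := deriv (fun y : ℝ => Real.log (Real.Gamma y)) x

open Real Filter Set Finset MeasureTheory Topology

lemma one_div_succ_sub_one_div_add (x : ℝ) (hx : 0 < x) (m : ℕ) :
    1 / ((m : ℝ) + 1) - 1 / (x + m) = (x - 1) / ((m + 1) * (x + m)) := by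
  field_simp
  ring

lemma abs_one_div_succ_sub_one_div_add_le {a b x : ℝ} (ha : 0 < a) (hx : x ∈ Icc a b)
    (m : ℕ) :
    |1 / ((m : ℝ) + 1) - 1 / (x + m)| ≤ (b + 1) * (1 + 1 / a) / ((m : ℝ) + 1) ^ 2 := by
  have hx0 : 0 < x := ha.trans_le hx.1
  have hm : (0 : ℝ) < m + 1 := by positivity
  have hxm : 0 < x + m := by positivity
  rw [one_div_succ_sub_one_div_add x hx0, abs_div, abs_of_pos (mul_pos hm hxm),
    div_le_div_iff₀ (mul_pos hm hxm) (by positivity)]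
  have h1 : |x - 1| ≤ b + 1 := abs_le.2 ⟨by linarith [hx.2], by linarith [hx.2]⟩
  have h2 : ((m : ℝ) + 1) ^ 2 ≤ (1 + 1 / a) * ((m + 1) * (x + m)) :=
    calc ((m : ℝ) + 1) ^ 2 ≤ (m + 1) * (m + 1 + x + m / x) := by
          have : 0 ≤ x + m / x := by positivity
          nlinarith
      _ = (1 + 1 / x) * ((m + 1) * (x + m)) := by field_simp; ring
      _ ≤ (1 + 1 / a) * ((m + 1) * (x + m)) := by
          gcongr
          exact hx.1
  calc |x - 1| * ((m : ℝ) + 1) ^ 2 ≤ (b + 1) * ((1 + 1 / a) * ((m + 1) * (x + m))) :=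
        mul_le_mul h1 h2 (by positivity) (by linarith [abs_nonneg (x - 1)])
    _ = (b + 1) * (1 + 1 / a) * ((m + 1) * (x + m)) := by ring

lemma summable_one_div_succ_sq : Summable (fun m : ℕ => 1 / ((m : ℝ) + 1) ^ 2) := by
  refine ((Real.summable_one_div_nat_add_rpow 1 2).2 one_lt_two).congr fun m => ?_
  rw [abs_of_pos (by positivity), Real.rpow_two]

lemma summable_one_div_succ_sub_one_div_add {x : ℝ} (hx : 0 < x) :
    Summable (fun m : ℕ => |1 / ((m : ℝ) + 1) - 1 / (x + m)|) :=
  .of_nonneg_of_le (fun _ => abs_nonneg _)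
    (abs_one_div_succ_sub_one_div_add_le hx ⟨le_rfl, le_rfl⟩)
    (by simpa only [mul_one_div] using summable_one_div_succ_sq.mul_left ((x + 1) * (1 + 1 / x)))

lemma hasDerivAt_logGammaSeq {x : ℝ} (hx : 0 < x) (n : ℕ) :
    HasDerivAt (fun y => BohrMollerup.logGammaSeq y n)
      (log n - ∑ m ∈ range (n + 1), 1 / (x + m)) x := by
  refine ((hasDerivAt_mul_const _).add_const _).sub (.fun_sum fun m _ => ?_)
  simpa using ((hasDerivAt_id x).add_const (m : ℝ)).log (by positivity)

lemma tendsto_log_sub_harmonic_succ :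
    Tendsto (fun n : ℕ => log n - harmonic (n + 1)) atTop (𝓝 (-eulerMascheroniConstant)) := by
  have h := tendsto_harmonic_sub_log.neg.sub tendsto_one_div_add_atTop_nhds_zero_nat
  rw [sub_zero] at h
  refine h.congr fun n => ?_
  rw [harmonic_succ]
  push_cast
  ring

lemma tendstoUniformlyOn_tsum_one_div_succ_sub_one_div_add {a b : ℝ} (ha : 0 < a) :
    TendstoUniformlyOn (fun n x => ∑ m ∈ range n, (1 / ((m : ℝ) + 1) - 1 / (x + m)))
      (fun x => ∑' m : ℕ, (1 / ((m : ℝ) + 1) - 1 / (x + m))) atTop (Icc a b) :=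
  tendstoUniformlyOn_tsum_nat (summable_one_div_succ_sq.mul_left ((b + 1) * (1 + 1 / a)))
    fun m _ hx => by
      simpa only [mul_one_div, Real.norm_eq_abs] using abs_one_div_succ_sub_one_div_add_le ha hx m

lemma hasDerivAt_log_Gamma {x : ℝ} (hx : 0 < x) :
    HasDerivAt (fun y => log (Gamma y))
      (-eulerMascheroniConstant + ∑' m : ℕ, (1 / ((m : ℝ) + 1) - 1 / (x + m))) x := by
  have hs : x ∈ Ioo (x / 2) (2 * x) := ⟨by linarith, by linarith⟩
  have hseries := (tendstoUniformlyOn_tsum_one_div_succ_sub_one_div_add (b := 2 * x)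
    (half_pos hx)).mono Ioo_subset_Icc_self
  have hderivs := (tendsto_log_sub_harmonic_succ.tendstoUniformlyOn_const _).add
    (fun u hu => (tendsto_add_atTop_nat 1).eventually (hseries u hu))
  refine hasDerivAt_of_tendstoUniformlyOn isOpen_Ioo (hderivs.congr (.of_forall fun n y _ => ?_))
    (.of_forall fun n y hy => hasDerivAt_logGammaSeq (by linarith [hy.1]) n)
    (fun y hy => BohrMollerup.tendsto_log_gamma (by linarith [hy.1])) hs
  have hH : (harmonic (n + 1) : ℝ) = ∑ m ∈ range (n + 1), 1 / ((m : ℝ) + 1) := by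
    simp [harmonic, one_div]
  simp only [Pi.add_apply, Finset.sum_sub_distrib, hH]
  ring

lemma digamma_eq_tsum {x : ℝ} (hx : 0 < x) :
    digamma x = -eulerMascheroniConstant + ∑' m : ℕ, (1 / ((m : ℝ) + 1) - 1 / (x + m)) :=
  (hasDerivAt_log_Gamma hx).deriv

lemma integral_abs_eq_abs_integral {α : Type*} [MeasurableSpace α] {μ : Measure α}
    {f : α → ℝ}
    (h : 0 ≤ᵐ[μ] f ∨ f ≤ᵐ[μ] 0) : ∫ a, |f a| ∂μ = |∫ a, f a ∂μ| := by
  rcases h with h | h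
  · rw [integral_congr_ae (h.mono fun a ha => abs_of_nonneg ha),
      abs_of_nonneg (integral_nonneg_of_ae h)]
  · rw [integral_congr_ae (h.mono fun a ha => abs_of_nonpos ha), integral_neg,
      abs_of_nonpos (integral_nonpos_of_ae h)]

lemma hasSum_rpow_sub_rpow {u : ℝ} (hu : u ∈ Ioo (0 : ℝ) 1) (s : ℝ) :
    HasSum (fun m : ℕ => u ^ (m : ℝ) - u ^ ((m : ℝ) + s)) ((1 - u ^ s) / (1 - u)) := by
  refine ((hasSum_geometric_of_lt_one hu.1.le hu.2).mul_left (1 - u ^ s)).congr_fun fun m => ?_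
  rw [Real.rpow_add hu.1, Real.rpow_natCast]
  ring

lemma integral_rpow_sub_rpow {z : ℝ} (hz : 0 < z) (m : ℕ) :
    ∫ u in (0 : ℝ)..1, (u ^ (m : ℝ) - u ^ ((m : ℝ) + (z - 1)))
      = 1 / ((m : ℝ) + 1) - 1 / (z + m) := by
  have h1 : (-1 : ℝ) < m := by linarith [(Nat.cast_nonneg m : (0 : ℝ) ≤ m)]
  have h2 : (-1 : ℝ) < m + (z - 1) := by linarith
  rw [intervalIntegral.integral_sub (intervalIntegral.intervalIntegrable_rpow' h1)
      (intervalIntegral.intervalIntegrable_rpow' h2), integral_rpow (.inl h1),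
    integral_rpow (.inl h2), Real.one_rpow, Real.one_rpow,
    Real.zero_rpow (by linarith : (0 : ℝ) < m + 1).ne',
    Real.zero_rpow (by linarith : (0 : ℝ) < m + (z - 1) + 1).ne']
  ring

lemma integral_one_sub_rpow_div_one_sub {z : ℝ} (hz : 0 < z) :
    ∫ u in (0 : ℝ)..1, (1 - u ^ (z - 1)) / (1 - u)
      = ∑' m : ℕ, (1 / ((m : ℝ) + 1) - 1 / (z + m)) := by
  set F : ℕ → ℝ → ℝ := fun m u => u ^ (m : ℝ) - u ^ ((m : ℝ) + (z - 1))
  have hF : ∀ m, ∫ u in Ioo (0 : ℝ) 1, F m u = 1 / ((m : ℝ) + 1) - 1 / (z + m) := by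
    intro m
    rw [← integral_Ioc_eq_integral_Ioo, ← intervalIntegral.integral_of_le zero_le_one,
      integral_rpow_sub_rpow hz]
  have hF_int : ∀ m, IntegrableOn (F m) (Ioo (0 : ℝ) 1) := fun m => by
    have h1 : (-1 : ℝ) < m := by linarith [(Nat.cast_nonneg m : (0 : ℝ) ≤ m)]
    have h2 : (-1 : ℝ) < m + (z - 1) := by linarith
    exact ((intervalIntegral.intervalIntegrable_rpow' h1).sub
      (intervalIntegral.intervalIntegrable_rpow' h2)).1.mono_set Ioo_subset_Ioc_self
  have hF_sign : ∀ m, 0 ≤ᵐ[volume.restrict (Ioo (0 : ℝ) 1)] F m ∨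
      F m ≤ᵐ[volume.restrict (Ioo (0 : ℝ) 1)] 0 := fun m => by
    rcases le_total 1 z with hz1 | hz1
    · refine .inl (ae_restrict_of_forall_mem measurableSet_Ioo fun u hu => ?_)
      exact sub_nonneg.2 (Real.rpow_le_rpow_of_exponent_ge hu.1 hu.2.le (by linarith))
    · refine .inr (ae_restrict_of_forall_mem measurableSet_Ioo fun u hu => ?_)
      exact sub_nonpos.2 (Real.rpow_le_rpow_of_exponent_ge hu.1 hu.2.le (by linarith))
  have hF_sum : Summable fun m => ∫ u in Ioo (0 : ℝ) 1, ‖F m u‖ := by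
    simp_rw [Real.norm_eq_abs, integral_abs_eq_abs_integral (hF_sign _), hF]
    exact summable_one_div_succ_sub_one_div_add hz
  rw [intervalIntegral.integral_of_le zero_le_one, integral_Ioc_eq_integral_Ioo,
    setIntegral_congr_fun measurableSet_Ioo fun u hu =>
      (hasSum_rpow_sub_rpow hu (z - 1)).tsum_eq.symm,
    ← integral_tsum_of_summable_integral_norm hF_int hF_sum]
  simp_rw [hF]

lemma integral_one_sub_rpow_div_one_sub_eq_digamma {z : ℝ} (hz : 0 < z) :
    ∫ u in (0 : ℝ)..1, (1 - u ^ (z - 1)) / (1 - u) = digamma z + eulerMascheroniConstant := by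
  rw [integral_one_sub_rpow_div_one_sub hz, digamma_eq_tsum hz]
  ring

lemma integral_one_sub_mul_rpow {y z : ℝ} (hy0 : y ≠ 0) (hy1 : y < 1) (hz : z ≠ 1) :
    ∫ x in (0 : ℝ)..1, (1 - x * y) ^ (z - 2) = (1 - (1 - y) ^ (z - 1)) / y / (z - 1) := by
  have hpos : ∀ x ∈ uIcc (0 : ℝ) 1, 0 < 1 - x * y := fun x hx => by
    rw [Set.uIcc_of_le zero_le_one] at hx
    rcases le_or_gt y 0 with hy | hy
    · linarith [mul_nonpos_of_nonneg_of_nonpos hx.1 hy]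
    · linarith [mul_le_mul_of_nonneg_right hx.2 hy.le]
  have hderiv : ∀ x ∈ uIcc (0 : ℝ) 1,
      HasDerivAt (fun x => -(1 - x * y) ^ (z - 1) / y / (z - 1)) ((1 - x * y) ^ (z - 2)) x :=
    fun x hx => by
      refine ((((hasDerivAt_mul_const y).const_sub 1).rpow_const
        (.inl (hpos x hx).ne')).neg.div_const y).div_const (z - 1) |>.congr_deriv ?_
      rw [show z - 1 - 1 = z - 2 by ring]
      field_simp [sub_ne_zero.2 hz]
  have hcont : ContinuousOn (fun x => (1 - x * y) ^ (z - 2)) (uIcc 0 1) :=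
    (continuousOn_const.sub (continuousOn_id.mul continuousOn_const)).rpow_const
      fun x hx => .inl (hpos x hx).ne'
  rw [intervalIntegral.integral_eq_sub_of_hasDerivAt hderiv hcont.intervalIntegrable]
  simp only [zero_mul, one_mul, sub_zero, Real.one_rpow]
  ring

lemma one_sub_mul_rpow_le {x y s : ℝ} (hx : x ∈ Ico (0 : ℝ) 1) (hy : y ∈ Ico (0 : ℝ) 1)
    (hs : s ≤ 0) : (1 - x * y) ^ s ≤ (1 - x) ^ (s / 2) * (1 - y) ^ (s / 2) := by
  have hx1 : 0 < 1 - x := by linarith [hx.2]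
  have hy1 : 0 < 1 - y := by linarith [hy.2]
  have hxy : 0 < 1 - x * y := by nlinarith [hx.1, hy.1]
  have hsq : (1 - x) * (1 - y) ≤ (1 - x * y) ^ (2 : ℝ) := by
    rw [Real.rpow_two, sq]
    have hx' : 1 - x ≤ 1 - x * y := by nlinarith [mul_nonneg hx.1 hy1.le]
    have hy' : 1 - y ≤ 1 - x * y := by nlinarith [mul_nonneg hy.1 hx1.le]
    exact mul_le_mul hx' hy' hy1.le hxy.le
  calc (1 - x * y) ^ s = ((1 - x * y) ^ (2 : ℝ)) ^ (s / 2) := by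
        rw [← Real.rpow_mul hxy.le]
        ring_nf
    _ ≤ ((1 - x) * (1 - y)) ^ (s / 2) :=
        Real.rpow_le_rpow_of_nonpos (mul_pos hx1 hy1) hsq (by linarith)
    _ = (1 - x) ^ (s / 2) * (1 - y) ^ (s / 2) := Real.mul_rpow hx1.le hy1.le

lemma integrableOn_one_sub_mul_rpow {s : ℝ} (hs : -2 < s) :
    IntegrableOn (fun p : ℝ × ℝ => (1 - p.1 * p.2) ^ s)
      (Icc (0 : ℝ) 1 ×ˢ Icc (0 : ℝ) 1) := by
  rcases le_total 0 s with hs0 | hs0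
  · exact ContinuousOn.integrableOn_compact (isCompact_Icc.prod isCompact_Icc)
      ((continuousOn_const.sub (continuousOn_fst.mul continuousOn_snd)).rpow_const
        fun _ _ => .inr hs0)
  have hg : IntegrableOn (fun t : ℝ => (1 - t) ^ (s / 2)) (Ioo 0 1) := by
    have := (intervalIntegral.intervalIntegrable_rpow' (a := 1) (b := 0) (r := s / 2)
      (by linarith)).comp_sub_left 1
    rw [sub_self, sub_zero] at this
    exact this.1.mono_set Ioo_subset_Ioc_self
  have hprod : IntegrableOn (fun p : ℝ × ℝ => (1 - p.1) ^ (s / 2) * (1 - p.2) ^ (s / 2))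
      (Ioo (0 : ℝ) 1 ×ˢ Ioo (0 : ℝ) 1) := by
    rw [IntegrableOn, Measure.volume_eq_prod, ← Measure.prod_restrict]
    exact hg.mul_prod hg
  refine IntegrableOn.congr_set_ae (Integrable.mono' hprod ?_ ?_)
    (Measure.set_prod_ae_eq Ioo_ae_eq_Icc Ioo_ae_eq_Icc).symm
  · exact (measurable_const.sub (measurable_fst.mul measurable_snd)).pow_const s
      |>.aestronglyMeasurable
  refine ae_restrict_of_forall_mem (measurableSet_Ioo.prod measurableSet_Ioo) fun p hp => ?_
  rw [Real.norm_of_nonneg (Real.rpow_nonneg (by nlinarith [hp.1.1, hp.1.2, hp.2.1, hp.2.2]) s)]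
  exact one_sub_mul_rpow_le (Ioo_subset_Ico_self hp.1) (Ioo_subset_Ico_self hp.2) hs0

lemma integral_integral_one_sub_mul_rpow {z : ℝ} (hz0 : 0 < z) (hz1 : z ≠ 1) :
    ∫ y in (0 : ℝ)..1, ∫ x in (0 : ℝ)..1, (1 - x * y) ^ (z - 2)
      = (eulerMascheroniConstant + digamma z) / (z - 1) := by
  have hinner : ∀ᵐ y : ℝ, y ∈ uIoc (0 : ℝ) 1 →
      ∫ x in (0 : ℝ)..1, (1 - x * y) ^ (z - 2) = (1 - (1 - y) ^ (z - 1)) / y / (z - 1) := by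
    filter_upwards [Measure.ae_ne volume (1 : ℝ)] with y hy1 hy
    rw [uIoc_of_le zero_le_one] at hy
    exact integral_one_sub_mul_rpow hy.1.ne' (lt_of_le_of_ne hy.2 hy1) hz1
  have hsubst : ∫ y in (0 : ℝ)..1, (1 - (1 - y) ^ (z - 1)) / y
      = ∫ u in (0 : ℝ)..1, (1 - u ^ (z - 1)) / (1 - u) := by
    simpa using intervalIntegral.integral_comp_sub_left
      (fun u : ℝ => (1 - u ^ (z - 1)) / (1 - u)) (a := 0) (b := 1) 1
  rw [intervalIntegral.integral_congr_ae hinner, intervalIntegral.integral_div, hsubst,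
    integral_one_sub_rpow_div_one_sub_eq_digamma hz0, add_comm]

theorem stmt2_general (α : ℝ) (hα0 : 0 < α) (hα : α ≠ 1/2) :
    (∫ y in (0:ℝ)..1, ∫ x in (0:ℝ)..1, (1 - x * y) ^ (2 * α - 2))
        = (Real.eulerMascheroniConstant + digamma (2 * α)) / (2 * α - 1) ∧
    MeasureTheory.IntegrableOn
      (fun p : ℝ × ℝ => (1 - p.1 * p.2) ^ (2 * α - 2))
      (Set.Icc (0:ℝ) 1 ×ˢ Set.Icc (0:ℝ) 1) :=
  ⟨integral_integral_one_sub_mul_rpow (by linarith) (fun h => hα (by linarith)),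
    integrableOn_one_sub_mul_rpow (by linarith)⟩

theorem stmt2 (α : ℝ) (hα0 : 0 < α) (hα1 : α < 1) (hα : α ≠ 1/2) :
    (∫ y in (0:ℝ)..1, ∫ x in (0:ℝ)..1, (1 - x * y) ^ (2 * α - 2))
        = (Real.eulerMascheroniConstant + digamma (2 * α)) / (2 * α - 1) ∧
    MeasureTheory.IntegrableOn
      (fun p : ℝ × ℝ => (1 - p.1 * p.2) ^ (2 * α - 2))
      (Set.Icc (0:ℝ) 1 ×ˢ Set.Icc (0:ℝ) 1) :=
  stmt2_general α hα0 hα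
end

section
/- Let 0 < β < 1, q ≥ 1 with βq > 1, and 0 < u ≤ 2^(-n). Then (∫₀^{2^{-(n-1)}} (u+v-uv)^{-βq} dv)^{1/q} ≤ C·2^{-n/q}·u^{-β} for a constant C depending only on β and q. -/
theorem stmt10 (β q : ℝ) (hβ0 : 0 < β) (hβ1 : β < 1) (hq : 1 ≤ q) (hβq : 1 < β * q) :
    ∃ C > 0, ∀ (n : ℕ) (u : ℝ), 1 ≤ n → 0 < u → u ≤ (2:ℝ) ^ (-(n:ℝ)) →
      (∫ v in (0:ℝ)..(2:ℝ) ^ (-((n:ℝ) - 1)), (u + v - u * v) ^ (-(β * q))) ^ (1/q)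
        ≤ C * (2:ℝ) ^ (-(n:ℝ) / q) * u ^ (-β) := by
  have hq0 : 0 < q := lt_of_lt_of_le one_pos hq
  refine ⟨2, two_pos, fun n u hn hu hun => ?_⟩
  set b : ℝ := (2:ℝ) ^ (-((n:ℝ) - 1)) with hbdef
  have hb : 0 < b := Real.rpow_pos_of_pos two_pos _
  have hu1 : u < 1 := by
    have : (2:ℝ) ^ (-(n:ℝ)) < 1 := by
      apply Real.rpow_lt_one_of_one_lt_of_neg one_lt_two
      have : (0:ℝ) < n := by exact_mod_cast hn
      linarith
    linarith
  -- pointwise lower bound on base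
  have hbase : ∀ v ∈ Set.Icc (0:ℝ) b, u ≤ u + v - u * v := by
    intro v hv
    nlinarith [hv.1, hu1]
  have hbase0 : ∀ v ∈ Set.Icc (0:ℝ) b, 0 < u + v - u * v := fun v hv =>
    lt_of_lt_of_le hu (hbase v hv)
  -- integrability
  have hcont : ContinuousOn (fun v => (u + v - u * v) ^ (-(β * q))) (Set.Icc 0 b) := by
    apply ContinuousOn.rpow_const
    · fun_prop
    · intro v hv
      exact Or.inl (ne_of_gt (hbase0 v hv))
  have hint : IntervalIntegrable (fun v => (u + v - u * v) ^ (-(β * q))) MeasureTheory.volume 0 b := by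
    apply ContinuousOn.intervalIntegrable
    rwa [Set.uIcc_of_le hb.le]
  have hmono : (∫ v in (0:ℝ)..b, (u + v - u * v) ^ (-(β * q)))
      ≤ ∫ _ in (0:ℝ)..b, u ^ (-(β * q)) := by
    apply intervalIntegral.integral_mono_on hb.le hint intervalIntegrable_const
    intro v hv
    exact Real.rpow_le_rpow_of_nonpos hu (hbase v hv) (by nlinarith)
  have hconst : (∫ _ in (0:ℝ)..b, u ^ (-(β * q))) = b * u ^ (-(β * q)) := by
    simp
  have hnn : 0 ≤ ∫ v in (0:ℝ)..b, (u + v - u * v) ^ (-(β * q)) := by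
    apply intervalIntegral.integral_nonneg hb.le
    intro v hv
    exact Real.rpow_nonneg (le_of_lt (hbase0 v hv)) _
  have h1 : (∫ v in (0:ℝ)..b, (u + v - u * v) ^ (-(β * q))) ^ (1/q)
      ≤ (b * u ^ (-(β * q))) ^ (1/q) := by
    apply Real.rpow_le_rpow hnn (hconst ▸ hmono) (by positivity)
  apply h1.trans
  have hsplit : (b * u ^ (-(β * q))) ^ (1/q) = b ^ (1/q) * u ^ (-β) := by
    rw [Real.mul_rpow hb.le (Real.rpow_nonneg hu.le _), ← Real.rpow_mul hu.le]
    rw [show -(β*q)*(1/q) = -β by field_simp]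
  rw [hsplit]
  have hbpow : b ^ (1/q) ≤ 2 * (2:ℝ) ^ (-(n:ℝ) / q) := by
    rw [hbdef, ← Real.rpow_mul (by norm_num : (0:ℝ) ≤ 2)]
    have : -((n:ℝ) - 1) * (1/q) = 1/q + (-(n:ℝ)/q) := by ring
    rw [this, Real.rpow_add two_pos]
    apply mul_le_mul_of_nonneg_right _ (Real.rpow_pos_of_pos two_pos _).le
    calc (2:ℝ) ^ (1/q) ≤ (2:ℝ) ^ (1:ℝ) := by
          apply Real.rpow_le_rpow_of_exponent_le one_le_two
          rw [div_le_one hq0]; exact hq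
      _ = 2 := Real.rpow_one 2
  exact mul_le_mul_of_nonneg_right hbpow (Real.rpow_nonneg hu.le _)
end
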